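/- If a symmetric bilinear map S : V × V → V on a real vector space V satisfies that S(v,v) is a scalar multiple of v for every v ∈ V, then there is a unique linear functional λ on V with S(v,w) = ½(λ(v)w + λ(w)v) for all v, w. -/

import Mathlib

/-- If a symmetric bilinear map `S : V × V → V` on a real vector space `V` of dimension at
least 2 satisfies that `S(v,v)` is a scalar multiple of `v` for every `v`, then there is a
unique linear functional `λ` on `V` with `S(v,w) = ½(λ(v) w + λ(w) v)` for all `v, w`. -/
theorem symmetric_bilinear_multiple_of_identity
    {V : Type*} [AddCommGroup V] [Module ℝ V] [FiniteDimensional ℝ V]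
    (hdim : 2 ≤ Module.finrank ℝ V)
    (S : V →ₗ[ℝ] V →ₗ[ℝ] V)
    (hsymm : ∀ v w : V, S v w = S w v)
    (hmul : ∀ v : V, ∃ c : ℝ, S v v = c • v) :
    ∃! lam : V →ₗ[ℝ] ℝ, ∀ v w : V,
      S v w = (1/2 : ℝ) • (lam v • w + lam w • v) := by
  classical
  set c : V → ℝ := fun v => if v = 0 then 0 else (hmul v).choose with hcdef
  have hc : ∀ v, S v v = c v • v := by
    intro v
    by_cases h : v = 0
    · simp [hcdef, h]
    · simp only [hcdef, if_neg h]
      exact (hmul v).choose_spec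
  have hinj : ∀ (v : V), v ≠ 0 → ∀ a b : ℝ, a • v = b • v → a = b := by
    intro v hv a b h
    exact smul_left_injective ℝ hv h
  have hc0 : c 0 = 0 := by simp [hcdef]
  have hscale : ∀ (s : ℝ) (v : V), v ≠ 0 → c (s • v) = s * c v := by
    intro s v hv
    by_cases hs : s = 0
    · simp [hs, hc0]
    · have h1 : S (s • v) (s • v) = (s * (s * c v)) • v := by
        simp only [map_smul, LinearMap.smul_apply]
        rw [hc v]
        module
      have h2 : S (s • v) (s • v) = (c (s • v) * s) • v := by
        rw [hc (s • v), smul_smul]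
      have h3 := hinj v hv _ _ (h1.symm.trans h2)
      exact mul_right_cancel₀ hs (by linear_combination -h3)
  -- key identity for linearly independent pairs
  have key : ∀ v w : V, LinearIndependent ℝ ![v, w] →
      (2:ℝ) • S v w = c w • v + c v • w := by
    intro v w hli
    have hvw : ∀ a b : ℝ, a • v + b • w = 0 → a = 0 ∧ b = 0 :=
      LinearIndependent.pair_iff.mp hli
    have E1 : (2:ℝ) • S v w = (c (v+w) - c v) • v + (c (v+w) - c w) • w := by
      have h := hc (v+w)
      rw [map_add] at h
      simp only [LinearMap.add_apply, map_add] at h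
      rw [hsymm w v, hc v, hc w] at h
      have h' : (2:ℝ) • S v w = c (v+w) • (v+w) - c v • v - c w • w := by
        rw [← h]; module
      rw [h']; module
    have E2 : (4:ℝ) • S v w
        = (c (v+(2:ℝ)•w) - c v) • v + (2*c (v+(2:ℝ)•w) - 4*c w) • w := by
      have h := hc (v+(2:ℝ)•w)
      rw [map_add] at h
      simp only [LinearMap.add_apply, map_add, map_smul, LinearMap.smul_apply] at h
      rw [hsymm w v, hc v, hc w] at h
      have h' : (4:ℝ) • S v w = c (v+(2:ℝ)•w) • (v+(2:ℝ)•w) - c v • v - (4 * c w) • w := by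
        rw [← h]; module
      rw [h']; module
    have h4 : ((c (v+(2:ℝ)•w) - c v) - 2*(c (v+w) - c v)) • v
        + ((2*c (v+(2:ℝ)•w) - 4*c w) - 2*(c (v+w) - c w)) • w = 0 := by
      have : ((c (v+(2:ℝ)•w) - c v) - 2*(c (v+w) - c v)) • v
          + ((2*c (v+(2:ℝ)•w) - 4*c w) - 2*(c (v+w) - c w)) • w
          = ((4:ℝ) • S v w) - (2:ℝ) • ((2:ℝ) • S v w) := by
        rw [E1, E2]; module
      rw [this]; module
    obtain ⟨h5, h6⟩ := hvw _ _ h4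
    have hA : c (v+w) = c v + c w := by linarith
    rw [E1, hA]
    module
  have hc0' : ∀ w : V, S 0 w = 0 := by intro w; simp
  -- the identity holds for all pairs
  have keyall : ∀ v w : V, (2:ℝ) • S v w = c w • v + c v • w := by
    intro v w
    by_cases hv : v = 0
    · subst hv; simp [hc0]
    by_cases hw : w = 0
    · subst hw; simp [hc0]
    by_cases hli : LinearIndependent ℝ ![v, w]
    · exact key v w hli
    · rw [LinearIndependent.pair_iff] at hli
      push_neg at hli
      obtain ⟨s, t, hst, hne⟩ := hli
      have ht : t ≠ 0 := by
        intro ht0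
        subst ht0
        have hs : s ≠ 0 := by
          intro hs0; exact hne hs0 rfl
        apply hv
        have : s • v = 0 := by simpa using hst
        exact (smul_eq_zero.mp this).resolve_left hs
      have hwv : w = (-(s/t)) • v := by
        have h1 : t • w = (-s) • v := by
          rw [neg_smul, eq_neg_iff_add_eq_zero, add_comm]; exact hst
        have h2 : t • ((-(s/t)) • v) = (-s) • v := by
          rw [smul_smul]; congr 1; field_simp
        exact smul_right_injective V ht (h1.trans h2.symm)
      rw [hwv, hscale _ v hv, map_smul]
      rw [hc v]
      module
  -- construct the linear functional
  have : Nontrivial V := by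
    have : 0 < Module.finrank ℝ V := by omega
    exact Module.finrank_pos_iff.mp this
  obtain ⟨u, hu⟩ := exists_ne (0 : V)
  obtain ⟨φ0, hφ0⟩ : ∃ φ : Module.Dual ℝ V, φ u ≠ 0 := by
    by_contra h
    push_neg at h
    exact hu ((Module.forall_dual_apply_eq_zero_iff ℝ u).mp h)
  set φ : V →ₗ[ℝ] ℝ := (φ0 u)⁻¹ • φ0 with hφdef
  have hφu : φ u = 1 := by
    simp [hφdef, inv_mul_cancel₀ hφ0]
  set lam : V →ₗ[ℝ] ℝ := (2:ℝ) • (φ ∘ₗ S.flip u) - c u • φ with hlamdef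
  have hlam : ∀ v, lam v = c v := by
    intro v
    have h := congrArg φ (keyall v u)
    simp only [map_smul, map_add, smul_eq_mul, hφu, mul_one] at h
    have : lam v = 2 * φ (S v u) - c u * φ v := by
      simp [hlamdef, LinearMap.flip_apply]
    rw [this]
    linarith
  refine ⟨lam, ?_, ?_⟩
  · intro v w
    calc S v w = (1/2:ℝ) • ((2:ℝ) • S v w) := by module
    _ = (1/2:ℝ) • (c w • v + c v • w) := by rw [keyall]
    _ = (1/2:ℝ) • (lam v • w + lam w • v) := by rw [hlam, hlam, add_comm]
  · intro lam' h'
    ext v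
    by_cases hv : v = 0
    · subst hv; simp
    · have h1 := h' v v
      rw [hc v] at h1
      have h2 : c v • v = lam' v • v := by
        rw [h1]; module
      rw [hlam]
      exact (hinj v hv _ _ h2).symm
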